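/- arXiv:1908.05420 — 5 statements merged into one kernel-verified Lean document; each statement's English description precedes it below -/
import Mathlib

section
/- Let D be a category with finite coproducts and let i : D ⥤ D' be a functor preserving finite coproducts. Then for every object d' of D', the costructured-arrow category over d' — whose objects are pairs (d, φ) with d an object of D and φ : i(d) ⟶ d', and whose morphisms (d₀, φ₀) → (d₁, φ₁) are morphisms ψ : d₀ ⟶ d₁ of D with i(ψ) ≫ φ₁ = φ₀ — is a sifted category. (Corollary 1.7 of the paper.) -/
open CategoryTheory CategoryTheory.Limits

universe v₁ v₂ u₁ u₂

/-- Let `D` be a category with finite coproducts and let `i : D ⥤ D'` be a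
functor preserving finite coproducts.  Then for every object `d'` of `D'`, the
costructured-arrow category over `d'` (objects: pairs `(d, φ)` with `φ : i.obj d ⟶ d'`;
morphisms: `ψ : d₀ ⟶ d₁` with `i.map ψ ≫ φ₁ = φ₀`) is sifted. -/
theorem stmt_0 {D : Type u₁} [Category.{v₁} D] {D' : Type u₂} [Category.{v₂} D']
    [HasFiniteCoproducts D] (i : D ⥤ D') [PreservesFiniteCoproducts i] (d' : D') :
    IsSifted (CostructuredArrow i d') := by
  have : Nonempty (CostructuredArrow i d') :=
    ⟨CostructuredArrow.mk ((initialIsInitial.isInitialObj i _).to d')⟩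
  exact IsSifted.isSifted_of_hasBinaryCoproducts_and_nonempty
end

section
/- Let D be a category with finite coproducts, let i : D ⥤ D' be a functor preserving finite coproducts, let C₁ be a category admitting all small colimits, let Φ : C₁ ⥤ C₂ be a functor preserving sifted colimits, and let F : D ⥤ C₁ be any functor. Then the composite of the pointwise left Kan extension Lan_i F with Φ, equipped with the natural transformation obtained by whiskering the unit F ⟶ i ⋙ (Lan_i F) with Φ, is a left Kan extension of F ⋙ Φ along i. Equivalently, the canonical comparison natural transformation Lan_i(F ⋙ Φ) ⟶ (Lan_i F) ⋙ Φ is an isomorphism. (Proposition 1.8 of the paper.) -/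
open CategoryTheory CategoryTheory.Limits

universe v v₂ u₁ u₂

/-!
The value of a pointwise left Kan extension along `i` at `Y` is the colimit over the comma
category `CostructuredArrow i Y`. Since `i` preserves finite coproducts, this category inherits
binary coproducts from `D`, and it is nonempty because it contains `i.obj ⊥_ D ⟶ Y`; hence it
is sifted, so `Φ` preserves each of these colimits.
-/

namespace CategoryTheory.CostructuredArrow

instance isSifted_of_preservesFiniteCoproducts {D : Type*} [Category* D] {D' : Type*}
    [Category* D'] [HasFiniteCoproducts D] (i : D ⥤ D') [PreservesFiniteCoproducts i] (Y : D') :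
    IsSifted (CostructuredArrow i Y) :=
  have : Nonempty (CostructuredArrow i Y) :=
    ⟨mk ((initialIsInitial.isInitialObj i _).to Y)⟩
  inferInstance

end CategoryTheory.CostructuredArrow

theorem stmt_1_general {D : Type v} [SmallCategory D] {D' : Type v} [SmallCategory D']
    [HasFiniteCoproducts D] (i : D ⥤ D') [PreservesFiniteCoproducts i]
    {C₁ : Type u₁} [Category.{v} C₁]
    {C₂ : Type u₂} [Category.{v₂} C₂] (Φ : C₁ ⥤ C₂)
    (hΦ : ∀ (A : Type v) [SmallCategory A] [IsSifted A], PreservesColimitsOfShape A Φ)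
    (F : D ⥤ C₁) (F' : D' ⥤ C₁) (α : F ⟶ i ⋙ F')
    (hpointwise : (Functor.LeftExtension.mk F' α).IsPointwiseLeftKanExtension) :
    (F' ⋙ Φ).IsLeftKanExtension
      (Functor.whiskerRight α Φ ≫ (Functor.associator i F' Φ).hom) := by
  have (Y : D') : PreservesColimitsOfShape (CostructuredArrow i Y) Φ := hΦ _
  exact (Functor.LeftExtension.isPointwiseLeftKanExtensionEquivOfIso
    (Functor.LeftExtension.postcompose₂ObjMkIso Φ α) (hpointwise.postcompose Φ)).isLeftKanExtension

/-- Let `D` be a small category with finite coproducts, `i : D ⥤ D'` a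
functor to a small category preserving finite coproducts, `C₁` a category admitting all
small colimits, `Φ : C₁ ⥤ C₂` a functor preserving sifted colimits, and `F : D ⥤ C₁` any
functor.  If `(F', α)` is a pointwise left Kan extension of `F` along `i`, then
`F' ⋙ Φ`, equipped with the natural transformation obtained by whiskering the unit
`α : F ⟶ i ⋙ F'` with `Φ`, is a left Kan extension of `F ⋙ Φ` along `i`. -/
theorem stmt_1 {D : Type v} [SmallCategory D] {D' : Type v} [SmallCategory D']
    [HasFiniteCoproducts D] (i : D ⥤ D') [PreservesFiniteCoproducts i]
    {C₁ : Type u₁} [Category.{v} C₁] [HasColimits C₁]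
    {C₂ : Type u₂} [Category.{v₂} C₂] (Φ : C₁ ⥤ C₂)
    (hΦ : ∀ (A : Type v) [SmallCategory A] [IsSifted A], PreservesColimitsOfShape A Φ)
    (F : D ⥤ C₁) (F' : D' ⥤ C₁) (α : F ⟶ i ⋙ F')
    (hpointwise : (Functor.LeftExtension.mk F' α).IsPointwiseLeftKanExtension) :
    (F' ⋙ Φ).IsLeftKanExtension
      (Functor.whiskerRight α Φ ≫ (Functor.associator i F' Φ).hom) :=
  stmt_1_general i Φ hΦ F F' α hpointwise
end

section
/- Let M be a monoid. Then the category FFM_{/M} — whose objects are pairs (H, f) with H a monoid isomorphic to a free monoid on a finite type and f : H →* M a monoid homomorphism, and whose morphisms (H₀, f₀) → (H₁, f₁) are monoid homomorphisms φ : H₀ →* H₁ with f₁ ∘ φ = f₀ — is a sifted category. (The discrete (1-categorical) case of the first assertion of Proposition 2.9 of the paper.) -/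
/-!
A nonempty category with binary coproducts is sifted. The free product of `FreeMonoid α` and
`FreeMonoid β` is `FreeMonoid (α ⊕ β)`, so the free-on-a-finite-type monoids are closed under
coproducts in `MonCat`; hence `FFM` has binary coproducts preserved by its inclusion into
`MonCat`, and then so does `FFM_{/M}`, whose coproducts are computed in `FFM`.
-/

open CategoryTheory

universe u

/-- The property of a bundled monoid of being isomorphic to a free monoid on a finite type.
`FFM` is the full subcategory of `MonCat` spanned by the monoids satisfying this property. -/
def IsFreeFinMonoid (N : MonCat.{u}) : Prop :=
  ∃ α : Type u, Finite α ∧ Nonempty (N ≃* FreeMonoid α)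

open Limits Monoid

noncomputable def Monoid.Coprod.freeMonoidEquiv (α β : Type*) :
    Coprod (FreeMonoid α) (FreeMonoid β) ≃* FreeMonoid (α ⊕ β) :=
  MonoidHom.toMulEquiv
    (Coprod.lift (FreeMonoid.map Sum.inl) (FreeMonoid.map Sum.inr))
    (FreeMonoid.lift (Sum.elim (Coprod.inl ∘ FreeMonoid.of) (Coprod.inr ∘ FreeMonoid.of)))
    (by ext <;> simp)
    (by ext (_ | _) <;> simp)

namespace MonCat

def coprodCofan (M N : MonCat.{u}) : BinaryCofan M N :=
  BinaryCofan.mk (P := of (Coprod M N)) (ofHom Coprod.inl) (ofHom Coprod.inr)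

def coprodCofanIsColimit (M N : MonCat.{u}) : IsColimit (coprodCofan M N) :=
  BinaryCofan.IsColimit.mk _ (fun f g => ofHom (Coprod.lift f.hom g.hom : Coprod M N →* _))
    (fun _ _ => rfl) (fun _ _ => rfl)
    (fun f g m hf hg => by
      ext1
      apply Coprod.hom_ext
      · exact congrArg Hom.hom hf
      · exact congrArg Hom.hom hg)

end MonCat

instance : ObjectProperty.IsClosedUnderIsomorphisms IsFreeFinMonoid.{u} where
  of_iso e := fun ⟨α, hα, ⟨f⟩⟩ => ⟨α, hα, ⟨e.symm.monCatIsoToMulEquiv.trans f⟩⟩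

lemma isFreeFinMonoid_coprod {M N : MonCat.{u}} (hM : IsFreeFinMonoid M) (hN : IsFreeFinMonoid N) :
    IsFreeFinMonoid (MonCat.of (Coprod M N)) := by
  obtain ⟨α, _, ⟨e⟩⟩ := hM
  obtain ⟨β, _, ⟨f⟩⟩ := hN
  exact ⟨α ⊕ β, inferInstance,
    ⟨(MulEquiv.coprodCongr e f).trans (Coprod.freeMonoidEquiv α β)⟩⟩

instance : ObjectProperty.IsClosedUnderBinaryCoproducts IsFreeFinMonoid.{u} where
  colimitsOfShape_le := by
    rintro X ⟨p⟩
    refine ObjectProperty.prop_of_iso _ ?_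
      (isFreeFinMonoid_coprod (p.prop_diag_obj ⟨.left⟩) (p.prop_diag_obj ⟨.right⟩))
    exact IsColimit.coconePointsIsoOfNatIso (MonCat.coprodCofanIsColimit _ _) p.isColimit
      (diagramIsoPair p.diag).symm

lemma isFreeFinMonoid_freeMonoid (α : Type u) [Finite α] :
    IsFreeFinMonoid (MonCat.of (FreeMonoid α)) :=
  ⟨α, inferInstance, ⟨MulEquiv.refl _⟩⟩

instance (N : MonCat.{u}) : Nonempty (CostructuredArrow (ObjectProperty.ι IsFreeFinMonoid) N) :=
  ⟨CostructuredArrow.mk (Y := ⟨_, isFreeFinMonoid_freeMonoid PEmpty⟩) (MonCat.ofHom 1)⟩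

/-- For any monoid `M`, the category `FFM_{/M}` — whose objects are pairs
`(H, f)` with `H` a monoid isomorphic to a free monoid on a finite type and `f : H →* M`,
and whose morphisms `(H₀, f₀) → (H₁, f₁)` are monoid homomorphisms `φ : H₀ →* H₁` with
`f₁ ∘ φ = f₀` — is sifted. -/
theorem stmt_4 (M : Type u) [Monoid M] :
    IsSifted (CostructuredArrow (ObjectProperty.ι IsFreeFinMonoid) (MonCat.of M)) :=
  IsSifted.isSifted_of_hasBinaryCoproducts_and_nonempty
end

section
/- Let C be a category admitting all small colimits, let I be a small connected category, let X, Y : I ⥤ C be functors and α : X ⟶ Y a natural transformation. Let X̄ be the colimit of X with colimit cocone ι. Define Z : I ⥤ C by letting Z(i) be the pushout of ι_i : X(i) ⟶ X̄ and α_i : X(i) ⟶ Y(i), with functoriality induced by the universal property of pushouts (for φ : i ⟶ j, the map Z(i) ⟶ Z(j) is induced by the identity of X̄ and Y(φ)). Then the natural transformation Y ⟶ Z whose components are the pushout coprojections Y(i) ⟶ Z(i) induces an isomorphism colim Y ≅ colim Z. (Proposition 5.3 of the paper, in the 1-categorical setting where the contractibility hypothesis on I becomes connectedness.) -/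
/-! The inverse `colim Z ⟶ colim Y` is induced by the maps `Z i ⟶ colim Y` given on the pushout
by `colimMap α` and `ι_i`. On the summand `colim X ⟶ Z i`, being a left inverse of
`colimMap (Y ⟶ Z)` amounts to `colimMap α ≫ colimMap (Y ⟶ Z) = inl_i ≫ ι_i`. Restricted to
`X j` this holds with `j` in place of `i` by the pushout square, and since the transition maps
of `Z` fix `colim X`, connectedness of `I` makes `inl_i ≫ ι_i` independent of `i`. -/

open CategoryTheory CategoryTheory.Limits

universe v u

variable {C : Type u} [Category.{v} C] [HasColimits C]
variable {I : Type v} [SmallCategory I]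
variable (X Y : I ⥤ C) (α : X ⟶ Y)

/-- The functor `Z : I ⥤ C` sending `i` to the pushout of the colimit coprojection
`ι_i : X i ⟶ colim X` and `α_i : X i ⟶ Y i`, with functoriality induced by the identity of
`colim X` and by `Y`. -/
noncomputable def pushoutDiagram : I ⥤ C where
  obj i := pushout (colimit.ι X i) (α.app i)
  map {i j} φ :=
    pushout.map (colimit.ι X i) (α.app i) (colimit.ι X j) (α.app j)
      (𝟙 (colimit X)) (Y.map φ) (X.map φ) (by simp) (α.naturality φ).symm
  map_id i := by ext <;> simp
  map_comp {i j k} φ ψ := by simp only [Functor.map_comp, pushout.map_comp, Category.comp_id]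

/-- The natural transformation `Y ⟶ Z` whose components are the pushout coprojections
`Y i ⟶ Z i`. -/
noncomputable def toPushoutDiagram : Y ⟶ pushoutDiagram X Y α where
  app i := pushout.inr (colimit.ι X i) (α.app i)
  naturality i j φ := by
    dsimp [pushoutDiagram]
    exact (pushout.inr_desc _ _ _).symm

-- `pushout.inl` typed with `(pushoutDiagram X Y α).obj i`, so that rewriting matches syntactically.
noncomputable def pushoutDiagramInl (i : I) : colimit X ⟶ (pushoutDiagram X Y α).obj i :=
  pushout.inl (colimit.ι X i) (α.app i)

lemma pushoutDiagram_condition (i : I) :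
    colimit.ι X i ≫ pushoutDiagramInl X Y α i = α.app i ≫ (toPushoutDiagram X Y α).app i :=
  pushout.condition

lemma pushoutDiagram_hom_ext {i : I} {W : C} {f g : (pushoutDiagram X Y α).obj i ⟶ W}
    (hl : pushoutDiagramInl X Y α i ≫ f = pushoutDiagramInl X Y α i ≫ g)
    (hr : (toPushoutDiagram X Y α).app i ≫ f = (toPushoutDiagram X Y α).app i ≫ g) : f = g :=
  pushout.hom_ext hl hr

lemma pushoutDiagramInl_map {i j : I} (φ : i ⟶ j) :
    pushoutDiagramInl X Y α i ≫ (pushoutDiagram X Y α).map φ = pushoutDiagramInl X Y α j :=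
  (pushout.inl_desc _ _ _).trans (Category.id_comp _)

lemma pushoutDiagramInl_comp_ι_eq [IsConnected I] (i j : I) :
    pushoutDiagramInl X Y α i ≫ colimit.ι (pushoutDiagram X Y α) i =
      pushoutDiagramInl X Y α j ≫ colimit.ι (pushoutDiagram X Y α) j :=
  constant_of_preserves_morphisms
    (fun k ↦ pushoutDiagramInl X Y α k ≫ colimit.ι (pushoutDiagram X Y α) k)
    (fun _ _ φ ↦ by
      rw [← colimit.w (pushoutDiagram X Y α) φ, ← Category.assoc, pushoutDiagramInl_map]) i j

noncomputable def pushoutDiagramDesc (i : I) : (pushoutDiagram X Y α).obj i ⟶ colimit Y :=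
  pushout.desc (colimMap α) (colimit.ι Y i) (by simp)

lemma pushoutDiagramInl_desc (i : I) :
    pushoutDiagramInl X Y α i ≫ pushoutDiagramDesc X Y α i = colimMap α :=
  pushout.inl_desc _ _ _

lemma toPushoutDiagram_app_desc (i : I) :
    (toPushoutDiagram X Y α).app i ≫ pushoutDiagramDesc X Y α i = colimit.ι Y i :=
  pushout.inr_desc _ _ _

noncomputable def colimitPushoutDiagramDesc : colimit (pushoutDiagram X Y α) ⟶ colimit Y :=
  colimit.desc _
    { pt := colimit Y
      ι :=
        { app := pushoutDiagramDesc X Y α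
          naturality i j φ := by
            apply pushoutDiagram_hom_ext
            · rw [← Category.assoc, pushoutDiagramInl_map, pushoutDiagramInl_desc,
                ← Category.assoc, pushoutDiagramInl_desc]
              exact (Category.comp_id _).symm
            · rw [← Category.assoc, ← (toPushoutDiagram X Y α).naturality, Category.assoc,
                toPushoutDiagram_app_desc, ← Category.assoc, toPushoutDiagram_app_desc]
              exact (colimit.w Y φ).trans (Category.comp_id _).symm } }

lemma ι_colimitPushoutDiagramDesc (i : I) :
    colimit.ι (pushoutDiagram X Y α) i ≫ colimitPushoutDiagramDesc X Y α =
      pushoutDiagramDesc X Y α i :=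
  colimit.ι_desc _ _

lemma colimMap_comp_colimMap_toPushoutDiagram [IsConnected I] (i : I) :
    colimMap α ≫ colimMap (toPushoutDiagram X Y α) =
      pushoutDiagramInl X Y α i ≫ colimit.ι (pushoutDiagram X Y α) i := by
  ext j
  rw [ι_colimMap_assoc, ι_colimMap, ← reassoc_of% pushoutDiagram_condition,
    pushoutDiagramInl_comp_ι_eq X Y α j i]

/-- Let `C` be a category admitting all small colimits, `I` a small
connected category, `X Y : I ⥤ C` functors and `α : X ⟶ Y` a natural transformation.
Let `Z : I ⥤ C` be the functor `i ↦ (colim X) ⊔_{X i} (Y i)` (pushout of the colimit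
coprojection and `α_i`).  Then the natural transformation `Y ⟶ Z`, given componentwise by
the pushout coprojections, induces an isomorphism `colim Y ≅ colim Z`. -/
theorem stmt_7 [IsConnected I] : IsIso (colimMap (toPushoutDiagram X Y α)) := by
  refine ⟨colimitPushoutDiagramDesc X Y α, ?_, ?_⟩
  · ext i
    rw [ι_colimMap_assoc, ι_colimitPushoutDiagramDesc, toPushoutDiagram_app_desc,
      Category.comp_id]
  · ext i : 1
    apply pushoutDiagram_hom_ext
    · rw [reassoc_of% ι_colimitPushoutDiagramDesc, reassoc_of% pushoutDiagramInl_desc,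
        colimMap_comp_colimMap_toPushoutDiagram X Y α i, Category.comp_id]
    · rw [reassoc_of% ι_colimitPushoutDiagramDesc, reassoc_of% toPushoutDiagram_app_desc,
        ι_colimMap, Category.comp_id]
end

section
/- Let K be a field, n a natural number, λ : Fin n → ℤ a function, and ξ an n × n matrix over K. Assume that ξ is nilpotent and that ξ i j = 0 whenever λ i < λ j. Then ∑_{i} λ(i) • (ξ i i) = 0 in K, where • denotes the ℤ-scalar action on K. Equivalently, the trace of D · ξ vanishes, where D is the diagonal matrix with entries the images of λ(i) in K. -/
/-!
Order the indices by the weight `l`. The hypothesis says that `ξ` is block triangular for the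
blocks `{i | l i = c}`, so every power of `ξ` is block triangular and its diagonal blocks are the
powers of the diagonal blocks of `ξ`. Hence each diagonal block of `ξ` is nilpotent and has trace
zero, and `∑ i, l i • ξ i i` is the sum over the weights `c` of `c` times the trace of block `c`.
-/

open Finset

namespace Matrix

variable {m α β R : Type*} [Fintype m]

theorem trace_toSquareBlock [AddCommMonoid R] [DecidableEq β] (M : Matrix m m R) (b : m → β)
    (c : β) : (M.toSquareBlock b c).trace = ∑ i with b i = c, M i i :=
  (sum_subtype _ (fun i => by simp) fun i => M i i).symm

theorem sum_smul_diag_eq_sum_smul_trace_toSquareBlock {S : Type*} [AddCommMonoid R]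
    [DistribSMul S R] [DecidableEq β] (M : Matrix m m R) (b : m → β) (f : β → S) :
    ∑ i, f (b i) • M i i = ∑ c ∈ univ.image b, f c • (M.toSquareBlock b c).trace := by
  rw [← sum_fiberwise_of_maps_to fun i _ => mem_image_of_mem b (mem_univ i)]
  refine sum_congr rfl fun c _ => ?_
  rw [trace_toSquareBlock, smul_sum]
  exact sum_congr rfl fun i hi => by rw [(mem_filter.1 hi).2]

variable [LinearOrder α] {b : m → α}

theorem BlockTriangular.toSquareBlock_mul [NonUnitalNonAssocSemiring R] {M N : Matrix m m R}
    (hM : M.BlockTriangular b) (hN : N.BlockTriangular b) (c : α) :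
    (M * N).toSquareBlock b c = M.toSquareBlock b c * N.toSquareBlock b c := by
  ext ⟨i, hi⟩ ⟨j, hj⟩
  simp only [toSquareBlock_def, of_apply, mul_apply]
  -- a summand leaving block `c` crosses below the diagonal in `M` or in `N`
  have hout : ∑ k : {k // ¬b k = c}, M i k * N k j = 0 := by
    refine Fintype.sum_eq_zero _ fun ⟨k, hk⟩ => ?_
    rcases lt_or_gt_of_ne hk with hlt | hgt
    · rw [hM (hi ▸ hlt), zero_mul]
    · rw [hN (hj ▸ hgt), mul_zero]
  rw [← Fintype.sum_subtype_add_sum_subtype (fun k => b k = c), hout, add_zero]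

variable [DecidableEq m] [Semiring R] {M : Matrix m m R}

theorem BlockTriangular.toSquareBlock_pow (hM : M.BlockTriangular b) (c : α) (k : ℕ) :
    (M ^ k).toSquareBlock b c = M.toSquareBlock b c ^ k := by
  induction k with
  | zero => ext ⟨i, _⟩ ⟨j, _⟩; simp [toSquareBlock_def, one_apply]
  | succ k ih => rw [pow_succ, (hM.pow k).toSquareBlock_mul hM, ih, pow_succ]

theorem BlockTriangular.isNilpotent_toSquareBlock (hM : M.BlockTriangular b)
    (hnil : IsNilpotent M) (c : α) : IsNilpotent (M.toSquareBlock b c) := by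
  obtain ⟨k, hk⟩ := hnil
  exact ⟨k, by rw [← hM.toSquareBlock_pow, hk]; rfl⟩

theorem BlockTriangular.sum_smul_diag_eq_zero_of_isNilpotent {R S : Type*} [CommRing R]
    [IsReduced R] [DistribSMul S R] {M : Matrix m m R} (hM : M.BlockTriangular b)
    (hnil : IsNilpotent M) (f : α → S) : ∑ i, f (b i) • M i i = 0 := by
  rw [sum_smul_diag_eq_sum_smul_trace_toSquareBlock]
  refine sum_eq_zero fun c _ => ?_
  rw [(isNilpotent_trace_of_isNilpotent (hM.isNilpotent_toSquareBlock hnil c)).eq_zero,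
    smul_zero]

end Matrix

/-- **Statement 11.** Let `K` be a field, `n` a natural number, `l : Fin n → ℤ` a function and
`ξ` an `n × n` matrix over `K`.  If `ξ` is nilpotent and `ξ i j = 0` whenever `l i < l j`,
then `∑ i, l i • ξ i i = 0` in `K` (the vanishing of the pairing `⟨l, ξ⟩`). -/
theorem stmt_11 (K : Type*) [Field K] (n : ℕ) (l : Fin n → ℤ)
    (ξ : Matrix (Fin n) (Fin n) K)
    (hnil : IsNilpotent ξ)
    (htri : ∀ i j : Fin n, l i < l j → ξ i j = 0) :
    ∑ i : Fin n, l i • ξ i i = 0 :=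
  -- `htri` makes `ξ` upper block triangular, which is `BlockTriangular` for the reversed order
  have hblock : ξ.BlockTriangular (OrderDual.toDual ∘ l) := fun i j h => htri i j h
  hblock.sum_smul_diag_eq_zero_of_isNilpotent hnil OrderDual.ofDual
end
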